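/- Let f∈𝒦⁻ and write f² for the function n↦f(n)². Then for every φ in the span of {ξ_n − ξ_{n+1} : n∈ℕ}, the operator S = f(N)T_{f²} + T_{f²}f(N) satisfies φ ∈ D(f(N)S)∩D(Sf(N)) and f(N)Sφ − S f(N)φ = −iφ. -/

import Mathlib

open Filter Topology
open scoped ENNReal

noncomputable section

abbrev l2 : Type := lp (fun _ : ℕ => ℂ) 2

def xi (n : ℕ) : l2 := lp.single 2 n 1

def FinSupp (φ : l2) : Prop := (Function.support (⇑φ : ℕ → ℂ)).Finite

/-- The class 𝒦. -/
def MemK (f : ℕ → ℝ) : Prop := 0 < f 0 ∧ ∀ n, f n < f (n + 1)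

/-- The class 𝒦⁻. -/
def MemKminus (f : ℕ → ℝ) : Prop := MemK f ∧ Summable (fun n => 1 / (f n) ^ 2)

def fsq (f : ℕ → ℝ) : ℕ → ℝ := fun n => (f n) ^ 2

/-- the sequence of the multiplication operator `f(N)` applied to φ -/
def mulSeq (f : ℕ → ℝ) (φ : ℕ → ℂ) : ℕ → ℂ := fun n => ((f n : ℝ) : ℂ) * φ n

/-- the sequence of `f(N)^p` applied to φ -/
def powSeq (f : ℕ → ℝ) (p : ℕ) (φ : ℕ → ℂ) : ℕ → ℂ := fun n => (((f n) ^ p : ℝ) : ℂ) * φ n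

/-- coordinates of `T_{f,m} φ`. -/
def TfmSeq (f : ℕ → ℝ) (m : ℕ) (φ : ℕ → ℂ) : ℕ → ℂ := fun n =>
  Complex.I * ∑ k ∈ Finset.Icc 1 m,
    ((if k ≤ n then φ (n - k) / ((f n - f (n - k) : ℝ) : ℂ) else 0)
      - φ (n + k) / ((f (n + k) - f n : ℝ) : ℂ))

/-- `(φ, ψ)` is in the graph of `T_f`. -/
def InGraphTf (f : ℕ → ℝ) (φ ψ : l2) : Prop :=
  ∃ h : ∀ m, Memℓp (TfmSeq f m (⇑φ)) 2,
    Tendsto (fun m => (⟨TfmSeq f m (⇑φ), h m⟩ : l2)) atTop (𝓝 ψ)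


/-- `(φ, ψ)` is in the graph of `S = f(N) T_{f²} + T_{f²} f(N)`, whose domain is
`D(f(N) T_{f²}) ∩ D(T_{f²} f(N))`. -/
def InGraphS (f : ℕ → ℝ) (φ ψ : l2) : Prop :=
  ∃ (T2φ T2Fφ : l2) (hF : Memℓp (mulSeq f ⇑φ) 2) (hFT : Memℓp (mulSeq f ⇑T2φ) 2),
    InGraphTf (fsq f) φ T2φ ∧
    InGraphTf (fsq f) (⟨mulSeq f ⇑φ, hF⟩ : l2) T2Fφ ∧
    ψ = (⟨mulSeq f ⇑T2φ, hFT⟩ : l2) + T2Fφ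

/-! For `φ` supported in a finite set `s`, the coordinates of `T_{g,m} φ` are eventually equal to
`(T_g φ)(n) = i ∑_{j ∈ s} φ_j / (g(n) - g(j))`, and for `g = f²` they are dominated, uniformly in
`m`, by one sequence `b` with `f b = O(1/f)`. Since `1/f ∈ ℓ²`, dominated convergence in `ℓ²`
identifies `T_{f²} φ` and `T_{f²} f(N) φ`, and `f(N) T_{f²} φ ∈ ℓ²`. The commutator then collapses:
`f(N) S φ - S f(N) φ = f(N)² T_{f²} φ - T_{f²} f(N)² φ`, whose `n`-th entry is
`i ∑_{j ∈ s, j ≠ n} φ_j = -i φ_n`, because `∑_j φ_j = 0` on the span of the `ξ_n - ξ_{n+1}`. -/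

open Finset Asymptotics

theorem Memℓp.of_isBigO {E F : Type*} [NormedAddCommGroup E] [NormedAddCommGroup F] {p : ℝ≥0∞}
    (hp : 0 < p.toReal) {x : ℕ → E} {y : ℕ → F} (hy : Memℓp y p) (h : x =O[atTop] y) :
    Memℓp x p :=
  memℓp_gen <| summable_of_isBigO_nat (hy.summable hp) <|
    h.norm_norm.rpow hp.le (Eventually.of_forall fun _ => norm_nonneg _)

theorem lp.tendsto_of_tendsto_apply_of_norm_le {ι α E : Type*} [NormedAddCommGroup E]
    {p : ℝ≥0∞} [Fact (1 ≤ p)] (hp : p ≠ ⊤) {l : Filter α} [l.NeBot]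
    {y : α → lp (fun _ : ι => E) p} {x : lp (fun _ : ι => E) p} {b : ι → ℝ} (hb : Memℓp b p)
    (hlim : ∀ i, Tendsto (fun a => y a i) l (𝓝 (x i))) (hbound : ∀ a i, ‖y a i‖ ≤ b i) :
    Tendsto y l (𝓝 x) := by
  have hp0 : 0 < p.toReal := ENNReal.toReal_pos (zero_lt_one.trans_le Fact.out).ne' hp
  have hx i : ‖x i‖ ≤ b i := le_of_tendsto' (tendsto_norm.comp (hlim i)) fun a => hbound a i
  have hb0 i : 0 ≤ b i := (norm_nonneg _).trans (hx i)
  have hsum : Tendsto (fun a => ‖y a - x‖ ^ p.toReal) l (𝓝 0) := by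
    simp_rw [lp.norm_rpow_eq_tsum hp0, lp.coeFn_sub, Pi.sub_apply]
    have hdom := tendsto_tsum_of_dominated_convergence (𝓕 := l)
      (f := fun a i => ‖y a i - x i‖ ^ p.toReal) (g := fun _ => 0)
      (bound := fun i => 2 ^ p.toReal * ‖b i‖ ^ p.toReal) ((hb.summable hp0).mul_left _)
      (fun i => ?_) (Eventually.of_forall fun a i => ?_)
    · simpa using hdom
    · have := ((hlim i).sub_const (x i)).norm.rpow_const (Or.inr hp0.le)
      simpa [Real.zero_rpow hp0.ne'] using this
    · rw [Real.norm_of_nonneg (by positivity), ← Real.mul_rpow zero_le_two (norm_nonneg _)]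
      gcongr
      calc ‖y a i - x i‖ ≤ ‖y a i‖ + ‖x i‖ := norm_sub_le _ _
        _ ≤ 2 * ‖b i‖ := by rw [Real.norm_of_nonneg (hb0 i)]; linarith [hbound a i, hx i]
  rw [tendsto_iff_norm_sub_tendsto_zero]
  have := hsum.rpow_const (p := p.toReal⁻¹) (Or.inr (inv_nonneg.2 hp0.le))
  simpa [Real.zero_rpow (inv_ne_zero hp0.ne'), Real.rpow_rpow_inv (norm_nonneg _) hp0.ne']
    using this

theorem memℓp_of_forall_notMem_eq_zero {ι E : Type*} [NormedAddCommGroup E] {p : ℝ≥0∞}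
    {s : Finset ι} {φ : ι → E} (hφ : ∀ j ∉ s, φ j = 0) : Memℓp φ p :=
  (memℓp_zero (s.finite_toSet.subset fun j hj => by_contra fun h => hj (hφ j h))).of_exponent_ge
    bot_le

namespace MemK

variable {f : ℕ → ℝ} (hf : MemK f)
include hf

theorem strictMono : StrictMono f :=
  strictMono_nat_of_lt_succ hf.2

theorem pos (n : ℕ) : 0 < f n :=
  hf.1.trans_le (hf.strictMono.monotone n.zero_le)

theorem fsq_strictMono : StrictMono (fsq f) := fun _ _ hab =>
  pow_lt_pow_left₀ (hf.strictMono hab) (hf.pos _).le two_ne_zero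

theorem isBigO_mul_inv_abs_fsq_sub (j : ℕ) :
    (fun n => f n * |fsq f n - fsq f j|⁻¹) =O[atTop] fun n => (f n)⁻¹ := by
  set g := fsq f
  refine IsBigO.of_bound (g (j + 1) / (g (j + 1) - g j)) ?_
  filter_upwards [eventually_gt_atTop j] with n hn
  have hgap : 0 < g (j + 1) - g j := sub_pos.2 (hf.fsq_strictMono j.lt_succ_self)
  have hgn : g (j + 1) ≤ g n := hf.fsq_strictMono.monotone hn
  have hgj : 0 < g j := pow_pos (hf.pos j) 2
  have hfn := hf.pos n
  have hdiff : 0 < g n - g j := by linarith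
  rw [Real.norm_of_nonneg (by positivity), Real.norm_of_nonneg (by positivity),
    abs_of_pos hdiff, ← div_eq_mul_inv, ← div_eq_mul_inv,
    div_div, div_le_div_iff₀ hdiff (mul_pos hgap hfn)]
  have : g n = f n * f n := sq (f n)
  nlinarith [mul_le_mul_of_nonneg_right hgn hgj.le]

end MemK

theorem TfmSeq_eq_sum_Icc (g : ℕ → ℝ) (m : ℕ) (φ : ℕ → ℂ) (n : ℕ) :
    TfmSeq g m φ n = Complex.I * ∑ j ∈ Icc (n - m) (n + m), φ j / ((g n - g j : ℝ) : ℂ) := by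
  set F : ℕ → ℂ := fun j => φ j / ((g n - g j : ℝ) : ℂ)
  have below : ∑ k ∈ Icc 1 m, (if k ≤ n then F (n - k) else 0) = ∑ j ∈ Ico (n - m) n, F j := by
    rw [← sum_filter]
    apply sum_nbij' (n - ·) (n - ·) <;> intro k hk <;>
      simp only [mem_filter, mem_Icc, mem_Ico] at hk ⊢ <;> omega
  have above : ∑ k ∈ Icc 1 m, φ (n + k) / ((g (n + k) - g n : ℝ) : ℂ)
      = -∑ j ∈ Ioc n (n + m), F j := by
    rw [← sum_neg_distrib]
    refine sum_nbij' (n + ·) (· - n) ?_ ?_ ?_ ?_ fun k _ => ?_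
    all_goals try (intro k hk; simp only [mem_Icc, mem_Ioc] at hk ⊢; omega)
    simp only [F, ← div_neg, ← Complex.ofReal_neg, neg_sub]
  have split : ∑ j ∈ Icc (n - m) (n + m), F j
      = ∑ j ∈ Ico (n - m) n, F j + ∑ j ∈ Ioc n (n + m), F j := by
    have hIcc : Icc (n - m) (n + m) = Ico (n - m) n ∪ Icc n (n + m) := by
      ext; simp only [mem_union, mem_Icc, mem_Ico]; omega
    rw [hIcc,
      sum_union (disjoint_left.2 fun j h₁ h₂ => by simp only [mem_Icc, mem_Ico] at h₁ h₂; omega),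
      Icc_eq_cons_Ioc (by omega), sum_cons]
    simp [F]
  rw [TfmSeq, sum_sub_distrib, below, above, split, sub_neg_eq_add]

section Kernel

variable {g : ℕ → ℝ} {s : Finset ℕ} {φ : ℕ → ℂ}

/-- `T_g φ` for `φ` supported in `s`. The diagonal term `j = n` vanishes since `x / 0 = 0`. -/
def TSeq (g : ℕ → ℝ) (s : Finset ℕ) (φ : ℕ → ℂ) : ℕ → ℂ := fun n =>
  Complex.I * ∑ j ∈ s, φ j / ((g n - g j : ℝ) : ℂ)

def TBound (g : ℕ → ℝ) (s : Finset ℕ) (φ : ℕ → ℂ) : ℕ → ℝ := fun n =>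
  ∑ j ∈ s, ‖φ j‖ * |g n - g j|⁻¹

theorem norm_div_ofReal_sub (g : ℕ → ℝ) (z : ℂ) (n j : ℕ) :
    ‖z / ((g n - g j : ℝ) : ℂ)‖ = ‖z‖ * |g n - g j|⁻¹ := by
  rw [norm_div, Complex.norm_real, Real.norm_eq_abs, div_eq_mul_inv]

theorem TBound_nonneg (g : ℕ → ℝ) (s : Finset ℕ) (φ : ℕ → ℂ) (n : ℕ) : 0 ≤ TBound g s φ n :=
  sum_nonneg fun _ _ => by positivity

theorem sum_Icc_eq_sum_inter (hφ : ∀ j ∉ s, φ j = 0) (m n : ℕ) :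
    ∑ j ∈ Icc (n - m) (n + m), φ j / ((g n - g j : ℝ) : ℂ)
      = ∑ j ∈ s ∩ Icc (n - m) (n + m), φ j / ((g n - g j : ℝ) : ℂ) :=
  (sum_subset inter_subset_right fun j hj hjs => by
    rw [hφ j fun h => hjs (mem_inter.2 ⟨h, hj⟩), zero_div]).symm

theorem TfmSeq_eventually_eq_TSeq (hφ : ∀ j ∉ s, φ j = 0) (n : ℕ) :
    ∀ᶠ m in atTop, TfmSeq g m φ n = TSeq g s φ n := by
  filter_upwards [eventually_ge_atTop (n + s.sup id)] with m hm
  have hs : s ⊆ Icc (n - m) (n + m) := fun j hj => by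
    have := le_sup (f := id) hj
    simp only [id, mem_Icc] at this ⊢
    omega
  rw [TfmSeq_eq_sum_Icc, sum_Icc_eq_sum_inter hφ, inter_eq_left.2 hs, TSeq]

theorem norm_TfmSeq_le (hφ : ∀ j ∉ s, φ j = 0) (m n : ℕ) :
    ‖TfmSeq g m φ n‖ ≤ TBound g s φ n := by
  rw [TfmSeq_eq_sum_Icc, sum_Icc_eq_sum_inter hφ, norm_mul, Complex.norm_I, one_mul]
  refine (norm_sum_le _ _).trans ?_
  simp only [norm_div_ofReal_sub]
  exact sum_le_sum_of_subset_of_nonneg inter_subset_left fun _ _ _ => by positivity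

theorem norm_TSeq_le (n : ℕ) : ‖TSeq g s φ n‖ ≤ TBound g s φ n := by
  rw [TSeq, norm_mul, Complex.norm_I, one_mul]
  refine (norm_sum_le _ _).trans ?_
  simp only [norm_div_ofReal_sub, TBound, le_refl]

end Kernel

theorem MemKminus.memℓp_inv {f : ℕ → ℝ} (hf : MemKminus f) : Memℓp (fun n => (f n)⁻¹) 2 :=
  memℓp_gen <| by simpa [Real.rpow_two, inv_pow] using hf.2

theorem memℓp_mul_TBound {f : ℕ → ℝ} (hf : MemKminus f) (s : Finset ℕ) (φ : ℕ → ℂ) :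
    Memℓp (fun n => f n * TBound (fsq f) s φ n) 2 := by
  simp only [TBound, mul_sum, mul_left_comm (f _)]
  exact Memℓp.finsetSum s fun j _ =>
    (hf.memℓp_inv.of_isBigO (by norm_num) (hf.1.isBigO_mul_inv_abs_fsq_sub j)).const_mul _

theorem memℓp_TBound {f : ℕ → ℝ} (hf : MemKminus f) (s : Finset ℕ) (φ : ℕ → ℂ) :
    Memℓp (TBound (fsq f) s φ) 2 :=
  ((memℓp_mul_TBound hf s φ).const_mul (f 0)⁻¹).mono fun n => by
    have h1 : 1 ≤ (f 0)⁻¹ * f n :=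
      (one_le_inv_mul₀ hf.1.1).2 (hf.1.strictMono.monotone n.zero_le)
    rw [Real.norm_of_nonneg (TBound_nonneg _ _ _ n), ← mul_assoc]
    exact le_mul_of_one_le_left (TBound_nonneg _ _ _ n) h1

theorem mulSeq_eq_zero_of_notMem {f : ℕ → ℝ} {s : Finset ℕ} {φ : ℕ → ℂ}
    (hφ : ∀ j ∉ s, φ j = 0) : ∀ j ∉ s, mulSeq f φ j = 0 := fun j hj => by
  rw [mulSeq, hφ j hj, mul_zero]

section Graph

variable {f : ℕ → ℝ} (hf : MemKminus f) {s : Finset ℕ}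
include hf

theorem exists_inGraphTf_TSeq (ψ : l2) (hψ : ∀ j ∉ s, ψ j = 0) :
    ∃ T : l2, ⇑T = TSeq (fsq f) s ψ ∧ InGraphTf (fsq f) ψ T :=
  ⟨⟨_, (memℓp_TBound hf s ψ).mono fun _ => norm_TSeq_le _⟩, rfl,
    fun m => (memℓp_TBound hf s ψ).mono (norm_TfmSeq_le hψ m),
    lp.tendsto_of_tendsto_apply_of_norm_le ENNReal.ofNat_ne_top (memℓp_TBound hf s ψ)
      (fun n => tendsto_nhds_of_eventually_eq (TfmSeq_eventually_eq_TSeq hψ n))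
      (fun m => norm_TfmSeq_le hψ m)⟩

theorem exists_inGraphS (ψ : l2) (hψ : ∀ j ∉ s, ψ j = 0) :
    ∃ Sψ : l2, InGraphS f ψ Sψ ∧
      ∀ n, Sψ n = f n * TSeq (fsq f) s ψ n + TSeq (fsq f) s (mulSeq f ψ) n := by
  have hF : Memℓp (mulSeq f ψ) 2 := memℓp_of_forall_notMem_eq_zero (mulSeq_eq_zero_of_notMem hψ)
  obtain ⟨T₀, hT₀, hgraph₀⟩ := exists_inGraphTf_TSeq hf ψ hψ
  obtain ⟨T₁, hT₁, hgraph₁⟩ := exists_inGraphTf_TSeq hf ⟨_, hF⟩ (mulSeq_eq_zero_of_notMem hψ)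
  have hFT : Memℓp (mulSeq f T₀) 2 := (memℓp_mul_TBound hf s ψ).mono fun n => by
    rw [mulSeq, norm_mul, Complex.norm_real, Real.norm_of_nonneg (hf.1.pos n).le, hT₀]
    exact mul_le_mul_of_nonneg_left (norm_TSeq_le n) (hf.1.pos n).le
  refine ⟨⟨_, hFT⟩ + T₁, ⟨T₀, T₁, hF, hFT, hgraph₀, hgraph₁, rfl⟩, fun n => ?_⟩
  rw [lp.coeFn_add, Pi.add_apply, hT₁, ← hT₀]
  rfl

end Graph

theorem commutator_TSeq {g : ℕ → ℝ} (hg : Function.Injective g) {s : Finset ℕ} {φ : ℕ → ℂ}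
    (hφ : ∀ j ∉ s, φ j = 0) (hsum : ∑ j ∈ s, φ j = 0) (n : ℕ) :
    (g n : ℂ) * TSeq g s φ n - TSeq g s (fun j => (g j : ℂ) * φ j) n = -(Complex.I * φ n) := by
  have hterm : ∀ j,
      (g n : ℂ) * (φ j / ((g n - g j : ℝ) : ℂ)) - g j * φ j / ((g n - g j : ℝ) : ℂ)
        = φ j - if j = n then φ j else 0 := fun j => by
    split_ifs with h
    · simp [h]
    · have : ((g n - g j : ℝ) : ℂ) ≠ 0 :=
        Complex.ofReal_ne_zero.2 (sub_ne_zero.2 fun e => h (hg e).symm)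
      field_simp
      push_cast
      ring
  have hdiag : (if n ∈ s then φ n else 0) = φ n := by
    split_ifs with h
    · rfl
    · exact (hφ n h).symm
  simp only [TSeq]
  rw [mul_left_comm, ← mul_sub, mul_sum, ← sum_sub_distrib, sum_congr rfl fun j _ => hterm j,
    sum_sub_distrib, hsum, sum_ite_eq', hdiag]
  ring

theorem xi_sub_xi_succ_apply (n j : ℕ) :
    (xi n - xi (n + 1)) j = (if j = n then 1 else 0) - if j = n + 1 then 1 else 0 := by
  simp [xi, Pi.single_apply]

theorem exists_finset_support_sum_eq_zero_of_mem_span (φ : l2)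
    (hφ : φ ∈ Submodule.span ℂ (Set.range fun n : ℕ => xi n - xi (n + 1))) :
    ∃ s : Finset ℕ, (∀ j ∉ s, φ j = 0) ∧ ∑ j ∈ s, φ j = 0 := by
  induction hφ using Submodule.span_induction with
  | mem x hx =>
    obtain ⟨n, rfl⟩ := hx
    refine ⟨{n, n + 1}, fun j hj => ?_, ?_⟩
    · simp only [mem_insert, mem_singleton, not_or] at hj
      simp [xi_sub_xi_succ_apply, hj.1, hj.2]
    · simp [xi_sub_xi_succ_apply]
  | zero => exact ⟨∅, fun _ _ => rfl, sum_empty⟩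
  | add x y _ _ hx hy =>
    obtain ⟨s, hxs, hsx⟩ := hx
    obtain ⟨t, hyt, hty⟩ := hy
    have hx' : ∑ j ∈ s ∪ t, x j = 0 := by
      rw [← sum_subset subset_union_left fun j _ hj => hxs j hj, hsx]
    have hy' : ∑ j ∈ s ∪ t, y j = 0 := by
      rw [← sum_subset subset_union_right fun j _ hj => hyt j hj, hty]
    refine ⟨s ∪ t, fun j hj => ?_, ?_⟩
    · rw [mem_union, not_or] at hj
      simp [hxs j hj.1, hyt j hj.2]
    · simp only [lp.coeFn_add, Pi.add_apply, sum_add_distrib, hx', hy', add_zero]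
  | smul c x _ hx =>
    obtain ⟨s, hxs, hsx⟩ := hx
    exact ⟨s, fun j hj => by simp [hxs j hj], by simp [← mul_sum, hsx]⟩

/-- Let `f ∈ 𝒦⁻`, `f²(n) = f n ^ 2` and `S = f(N) T_{f²} + T_{f²} f(N)`.
Then every `φ` in the span of `{ξ_n - ξ_{n+1}}` satisfies `φ ∈ D(f(N) S) ∩ D(S f(N))` and
`f(N) S φ - S f(N) φ = -i φ`. -/
theorem stmt8 (f : ℕ → ℝ) (hf : MemKminus f) (φ : l2)
    (hφ : φ ∈ Submodule.span ℂ (Set.range fun n : ℕ => xi n - xi (n + 1))) :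
    ∃ (Sφ SFφ : l2) (hF : Memℓp (mulSeq f ⇑φ) 2) (hS : Memℓp (mulSeq f ⇑Sφ) 2),
      InGraphS f φ Sφ ∧
      InGraphS f (⟨mulSeq f ⇑φ, hF⟩ : l2) SFφ ∧
      (⟨mulSeq f ⇑Sφ, hS⟩ : l2) - SFφ = -(Complex.I • φ) := by
  obtain ⟨s, hsupp, hsum⟩ := exists_finset_support_sum_eq_zero_of_mem_span φ hφ
  have hF : Memℓp (mulSeq f φ) 2 :=
    memℓp_of_forall_notMem_eq_zero (mulSeq_eq_zero_of_notMem hsupp)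
  obtain ⟨Sφ, hSφ, hSφ_apply⟩ := exists_inGraphS hf φ hsupp
  obtain ⟨SFφ, hSFφ, hSFφ_apply⟩ := exists_inGraphS hf ⟨_, hF⟩ (mulSeq_eq_zero_of_notMem hsupp)
  have hmulSeq : mulSeq f (mulSeq f φ) = fun j => ((fsq f j : ℝ) : ℂ) * φ j := by
    funext j
    simp only [mulSeq, fsq]
    push_cast
    ring
  have hcomm : mulSeq f Sφ = ⇑(SFφ - Complex.I • φ) := by
    funext n
    have := commutator_TSeq hf.1.fsq_strictMono.injective hsupp hsum n
    rw [← hmulSeq] at this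
    simp only [mulSeq, lp.coeFn_sub, lp.coeFn_smul, Pi.sub_apply, Pi.smul_apply, smul_eq_mul,
      hSφ_apply, hSFφ_apply, fsq] at this ⊢
    push_cast at this ⊢
    linear_combination this
  refine ⟨Sφ, SFφ, hF, hcomm ▸ (SFφ - Complex.I • φ).2, hSφ, hSFφ, ?_⟩
  apply lp.ext
  change mulSeq f Sφ - SFφ = ⇑(-(Complex.I • φ))
  rw [hcomm, lp.coeFn_sub, lp.coeFn_neg]
  abel
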